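/- Correctness of the inductive characterization of the regular declarative semantics: for every logic program with coclauses (P,coP) and every ground atom A, the judgment (∅ ⊢ A) belongs to the inductive interpretation of the inference system Loop(P,coP) if and only if A ∈ FlexReg(P,coP). -/

import Mathlib

/- Framework: flexible coinductive logic programming (logic programs with coclauses).
   Terms are possibly infinite trees, modelled as M-types of a polynomial functor. -/

namespace FlexLP

/-- A first-order signature: function symbols and predicate symbols, each with an arity.
Variables are represented by natural numbers (a countably infinite set). -/
structure Sig where
  Func : Type
  far : Func → ℕ
  Pred : Type
  par : Pred → ℕ

/-- Polynomial functor whose M-type is the type of possibly infinite terms: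
nodes are labelled by function symbols (with `far` children) or variables (no children). -/
def TermP (S : Sig) : PFunctor :=
  ⟨S.Func ⊕ ℕ, fun l => Fin (match l with | Sum.inl f => S.far f | Sum.inr _ => 0)⟩

/-- Possibly infinite terms over the signature `S`. -/
def Term (S : Sig) : Type := (TermP S).M

/-- The term consisting of a single variable `x`. -/
def Term.var (S : Sig) (x : ℕ) : Term S :=
  PFunctor.M.mk ⟨Sum.inr x, fun i => i.elim0⟩

/-- The variable `x` occurs in the term `t`. -/
inductive Term.Occurs (S : Sig) (x : ℕ) : Term S → Prop
  | root (t : Term S) (h : (PFunctor.M.dest t).1 = Sum.inr x) : Term.Occurs S x t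
  | child (t : Term S) (i : (TermP S).B (PFunctor.M.dest t).1)
      (h : Term.Occurs S x ((PFunctor.M.dest t).2 i)) : Term.Occurs S x t

/-- The term `t` is finite (syntactic): all its branches are finite. -/
inductive Term.IsFinite (S : Sig) : Term S → Prop
  | mk (t : Term S) (h : ∀ i, Term.IsFinite S ((PFunctor.M.dest t).2 i)) : Term.IsFinite S t

/-- The term `t` is ground: no variable occurs in it. -/
def Term.Ground (S : Sig) (t : Term S) : Prop := ∀ x, ¬ Term.Occurs S x t

/-- A substitution: a map from a finite set of variables to terms. -/
structure Subst (S : Sig) where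
  toFun : ℕ → Option (Term S)
  finDom : {x | (toFun x).isSome}.Finite

/-- Domain of a substitution. -/
def Subst.dom {S : Sig} (σ : Subst S) : Set ℕ := {x | (σ.toFun x).isSome}

/-- A substitution is ground if all its values are ground terms. -/
def Subst.Ground {S : Sig} (σ : Subst S) : Prop :=
  ∀ x t, σ.toFun x = some t → Term.Ground S t

/-- `σ ⊑ θ` : `dom σ ⊆ dom θ` and the two substitutions agree on `dom σ`. -/
def Subst.le {S : Sig} (σ θ : Subst S) : Prop :=
  ∀ x t, σ.toFun x = some t → θ.toFun x = some t

/-- One step of (simultaneous) substitution application, as a coalgebra.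
The boolean flag records whether we are still in the original term (`true`)
or inside a substituted term (`false`). -/
def substStep (S : Sig) (σ : Subst S) : Term S × Bool → (TermP S).Obj (Term S × Bool) :=
  fun p =>
    match PFunctor.M.dest p.1, p.2 with
    | ⟨Sum.inl f, ch⟩, b => ⟨Sum.inl f, fun i => (ch i, b)⟩
    | ⟨Sum.inr x, ch⟩, true =>
        match σ.toFun x with
        | some s =>
            match PFunctor.M.dest s with
            | ⟨l, ch'⟩ => ⟨l, fun i => (ch' i, false)⟩
        | none => ⟨Sum.inr x, fun i => (ch i, true)⟩
    | ⟨Sum.inr x, ch⟩, false => ⟨Sum.inr x, fun i => (ch i, false)⟩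

/-- Application `tσ` of a substitution to a term. -/
def Term.subst {S : Sig} (t : Term S) (σ : Subst S) : Term S :=
  PFunctor.M.corec (substStep S σ) (t, true)

/-- Atoms: a predicate symbol applied to terms (a possibly infinite tree whose
root is labelled by a predicate symbol). -/
structure Atom (S : Sig) where
  pred : S.Pred
  args : Fin (S.par pred) → Term S

/-- The variable `x` occurs in the atom `A`. -/
def Atom.Occurs {S : Sig} (x : ℕ) (A : Atom S) : Prop := ∃ i, Term.Occurs S x (A.args i)

/-- Ground atoms. The set of all ground atoms is the complete Herbrand base. -/
def Atom.Ground {S : Sig} (A : Atom S) : Prop := ∀ i, Term.Ground S (A.args i)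

/-- Finite (syntactic) atoms. -/
def Atom.IsFinite {S : Sig} (A : Atom S) : Prop := ∀ i, Term.IsFinite S (A.args i)

/-- Application of a substitution to an atom. -/
def Atom.subst {S : Sig} (A : Atom S) (σ : Subst S) : Atom S :=
  ⟨A.pred, fun i => Term.subst (A.args i) σ⟩

/-- A (definite) clause `head :- body`, made of finite atoms. -/
structure Clause (S : Sig) where
  head : Atom S
  body : List (Atom S)
  finHead : head.IsFinite
  finBody : ∀ B ∈ body, B.IsFinite

/-- Variables occurring in a clause. -/
def clauseVars {S : Sig} (C : Clause S) : Set ℕ :=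
  {x | Atom.Occurs x C.head ∨ ∃ B ∈ C.body, Atom.Occurs x B}

/-- `Ground P` : the ground instances of clauses of `P`, viewed as inference rules
(pairs premises/conclusion) on the complete Herbrand base. -/
def GroundInst {S : Sig} (P : Set (Clause S)) : Set (Atom S × List (Atom S)) :=
  {r | ∃ C ∈ P, ∃ σ : Subst S, σ.Ground ∧
        r.1 = C.head.subst σ ∧ r.2 = C.body.map (fun B => B.subst σ) ∧
        r.1.Ground ∧ ∀ B ∈ r.2, B.Ground}

/-- The (one step) inference operator `T_P` associated to a program. -/
def TP {S : Sig} (P : Set (Clause S)) (I : Set (Atom S)) : Set (Atom S) :=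
  {A | ∃ r ∈ GroundInst P, r.1 = A ∧ ∀ B ∈ r.2, B ∈ I}

/-- `I` is a model of `P`. -/
def IsModel {S : Sig} (P : Set (Clause S)) (I : Set (Atom S)) : Prop := TP P I ⊆ I

/-- `I` is a comodel of `P`. -/
def IsComodel {S : Sig} (P : Set (Clause S)) (I : Set (Atom S)) : Prop := I ⊆ TP P I

/-- `Ind P` : the inductive declarative semantics, i.e. the least model of `P`. -/
def Ind {S : Sig} (P : Set (Clause S)) : Set (Atom S) := ⋂₀ {I | IsModel P I}

/-- `FlexCo (P,coP)` : the declarative semantics of a logic program with coclauses,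
i.e. the largest comodel of `P` included in `Ind (P ∪ coP)` (union of all such comodels). -/
def FlexCo {S : Sig} (P coP : Set (Clause S)) : Set (Atom S) :=
  ⋃₀ {I | IsComodel P I ∧ I ⊆ Ind (P ∪ coP)}

/-- `FlexReg (P,coP)` : the regular declarative semantics, i.e. the union of all
finite comodels of `P` included in `Ind (P ∪ coP)`. -/
def FlexReg {S : Sig} (P coP : Set (Clause S)) : Set (Atom S) :=
  ⋃₀ {I | I.Finite ∧ IsComodel P I ∧ I ⊆ Ind (P ∪ coP)}

/-- An equation `s ≐ t` between terms. -/
abbrev Eqn (S : Sig) := Term S × Term S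

/-- Variables occurring in a set of equations. -/
def eqnVars {S : Sig} (E : Set (Eqn S)) : Set ℕ :=
  {x | ∃ e ∈ E, Term.Occurs S x e.1 ∨ Term.Occurs S x e.2}

/-- `E` is a finite set of equations between finite (syntactic) terms. -/
def EqnSetFin {S : Sig} (E : Set (Eqn S)) : Prop :=
  E.Finite ∧ ∀ e ∈ E, Term.IsFinite S e.1 ∧ Term.IsFinite S e.2

/-- `sol E` : the set of solutions of `E`, i.e. ground substitutions defined on all
variables of `E` that unify all the equations in `E`. -/
def sol {S : Sig} (E : Set (Eqn S)) : Set (Subst S) :=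
  {σ | σ.Ground ∧ eqnVars E ⊆ σ.dom ∧ ∀ e ∈ E, e.1.subst σ = e.2.subst σ}

/-- `E` is solvable. -/
def Solvable {S : Sig} (E : Set (Eqn S)) : Prop := (sol E).Nonempty

/-- `eqs(A,B)` : the equations between the corresponding arguments of two atoms
with the same predicate symbol. -/
def atomEqs {S : Sig} (A B : Atom S) : Set (Eqn S) :=
  {e | ∃ (h : A.pred = B.pred) (i : Fin (S.par A.pred)),
        e = (A.args i, B.args (Fin.cast (congrArg S.par h) i))}

/-- Variables occurring in a set of atoms. -/
def atomsVars {S : Sig} (H : Set (Atom S)) : Set ℕ := {x | ∃ A ∈ H, Atom.Occurs x A}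

/-- Variables occurring in a sequence of atoms (a goal). -/
def goalVars {S : Sig} (G : List (Atom S)) : Set ℕ := {x | ∃ A ∈ G, Atom.Occurs x A}

/-- `ρ` is a renaming of the variables of clause `C` to fresh variables avoiding `avoid`:
it maps (injectively) every variable of `C` to a variable not in `avoid`. -/
def FreshRenamingFor {S : Sig} (ρ : Subst S) (C : Clause S) (avoid : Set ℕ) : Prop :=
  (∀ x t, ρ.toFun x = some t → ∃ y, t = Term.var S y ∧ y ∉ avoid) ∧
  clauseVars C ⊆ ρ.dom ∧
  (∀ x y, ρ.toFun x = ρ.toFun y → (ρ.toFun x).isSome → x = y)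

/-- The big-step operational semantics judgment `P;coP ⊢ H : ⟨G | E⟩ ⇒ E'` of
flexible coSLD resolution, inductively defined by the rules (empty), (co-hyp), (step). -/
inductive OpSem (S : Sig) :
    Set (Clause S) → Set (Clause S) → Set (Atom S) → List (Atom S) →
      Set (Eqn S) → Set (Eqn S) → Prop
  | empty (P coP : Set (Clause S)) (H : Set (Atom S)) (E : Set (Eqn S)) :
      OpSem S P coP H [] E E
  | cohyp {P coP : Set (Clause S)} {H : Set (Atom S)} {G1 G2 : List (Atom S)}
      {A B : Atom S} {E1 E2 E3 : Set (Eqn S)} :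
      coP ≠ ∅ → B ∈ H → A.pred = B.pred →
      Solvable (E1 ∪ atomEqs A B) →
      OpSem S (P ∪ coP) ∅ ∅ [A] (E1 ∪ atomEqs A B) E2 →
      OpSem S P coP H (G1 ++ G2) E2 E3 →
      OpSem S P coP H (G1 ++ A :: G2) E1 E3
  | step {P coP : Set (Clause S)} {H : Set (Atom S)} {G1 G2 : List (Atom S)}
      {A : Atom S} {E1 E2 E3 : Set (Eqn S)} (C : Clause S) (ρ : Subst S) :
      C ∈ P →
      FreshRenamingFor ρ C (eqnVars E1 ∪ atomsVars H ∪ goalVars (G1 ++ A :: G2)) →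
      A.pred = C.head.pred →
      Solvable (E1 ∪ atomEqs A (C.head.subst ρ)) →
      OpSem S P coP (H ∪ {A}) (C.body.map (fun B => B.subst ρ))
        (E1 ∪ atomEqs A (C.head.subst ρ)) E2 →
      OpSem S P coP H (G1 ++ G2) E2 E3 →
      OpSem S P coP H (G1 ++ A :: G2) E1 E3

/-- `Ans(G,E,I)` : the set of answers to the goal `⟨G | E⟩` correct in the
interpretation `I`. -/
def Ans {S : Sig} (G : List (Atom S)) (E : Set (Eqn S)) (I : Set (Atom S)) :
    Set (Subst S) :=
  {σ | σ ∈ sol E ∧ goalVars G ⊆ σ.dom ∧ ∀ A ∈ G, A.subst σ ∈ I}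

/-- The inductive interpretation of the inference system `Loop(P,coP)`, whose judgments
`H ⊢ A` pair a ground atom with a set of ground atoms (circular hypotheses);
rules: (hp) `H ⊢ A` if `A ∈ H` and `A ∈ Ind (P ∪ coP)`;
(rule) from `H∪{A} ⊢ B` for every premise `B` of a ground instance of a clause of `P`
with conclusion `A`, infer `H ⊢ A`. -/
inductive LoopInd {S : Sig} (P coP : Set (Clause S)) : Set (Atom S) → Atom S → Prop
  | hp {H : Set (Atom S)} {A : Atom S} :
      A ∈ H → A ∈ Ind (P ∪ coP) → LoopInd P coP H A
  | rule {H : Set (Atom S)} {A : Atom S} (r : Atom S × List (Atom S)) :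
      r ∈ GroundInst P → r.1 = A →
      (∀ B ∈ r.2, LoopInd P coP (H ∪ {A}) B) →
      LoopInd P coP H A

/-! A derivation of `H ⊢ A` in `Loop(P,coP)` is a finite tree whose internal nodes are
ground instances of clauses of `P` and whose leaves are circular hypotheses. Collecting the
atoms at its internal nodes gives a finite set `I` in which every atom is the conclusion of a
rule with premises in `I ∪ H`; with `H = ∅` this is a finite comodel, and every atom in it is in
`Ind (P ∪ coP)` because the leaves are. Conversely, from a finite comodel `I ⊆ Ind (P ∪ coP)`
one unfolds rules of `I` until an atom repeats on the branch; this terminates since each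
unfolding adds a new atom of `I` to the hypotheses. -/

def IsComodelOver {S : Sig} (P : Set (Clause S)) (H I : Set (Atom S)) : Prop :=
  I ⊆ TP P (I ∪ H)

section

variable {S : Sig} {P coP Q : Set (Clause S)} {H I J : Set (Atom S)} {A : Atom S}

theorem TP_mono (P : Set (Clause S)) (h : I ⊆ J) : TP P I ⊆ TP P J :=
  fun _ ⟨r, hr, hrA, hprem⟩ => ⟨r, hr, hrA, fun B hB => h (hprem B hB)⟩

theorem GroundInst_mono (h : P ⊆ Q) : GroundInst P ⊆ GroundInst Q :=
  fun _ ⟨C, hC, hσ⟩ => ⟨C, h hC, hσ⟩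

theorem Ind_subset_of_isModel (hI : IsModel Q I) : Ind Q ⊆ I :=
  fun _ hA => hA I hI

theorem isModel_Ind (Q : Set (Clause S)) : IsModel Q (Ind Q) :=
  fun _ hA _ hI => hI (TP_mono Q (Ind_subset_of_isModel hI) hA)

theorem isComodelOver_empty_iff : IsComodelOver P ∅ I ↔ IsComodel P I := by
  rw [IsComodelOver, Set.union_empty, IsComodel]

theorem LoopInd.mem_Ind (h : LoopInd P coP H A) : A ∈ Ind (P ∪ coP) := by
  induction h with
  | hp _ hA => exact hA
  | rule r hr hrA _ ih =>
    exact isModel_Ind _ ⟨r, GroundInst_mono Set.subset_union_left hr, hrA, ih⟩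

theorem LoopInd.exists_finite_isComodelOver (h : LoopInd P coP H A) :
    ∃ I : Set (Atom S), I.Finite ∧ A ∈ I ∪ H ∧ IsComodelOver P H I ∧
      I ⊆ Ind (P ∪ coP) := by
  induction h with
  | hp hAH _ => exact ⟨∅, Set.finite_empty, Or.inr hAH, Set.empty_subset _, Set.empty_subset _⟩
  | @rule H A r hr hrA hprem ih =>
    choose! f hfin hmem hco hInd using ih
    set I := insert A (⋃ B ∈ r.2, f B)
    have hfB : ∀ B ∈ r.2, f B ∪ (H ∪ {A}) ⊆ I ∪ H := by
      rintro B hB C (hC | hC | rfl)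
      · exact Or.inl (Set.mem_insert_of_mem _ (Set.mem_biUnion hB hC))
      · exact Or.inr hC
      · exact Or.inl (Set.mem_insert C _)
    refine ⟨I, (r.2.finite_toSet.biUnion hfin).insert A, Or.inl (Set.mem_insert A _), ?_, ?_⟩
    · rintro C (rfl | hC)
      · exact ⟨r, hr, hrA, fun B hB => hfB B hB (hmem B hB)⟩
      · obtain ⟨B, hB, hCB⟩ := Set.mem_iUnion₂.mp hC
        exact TP_mono P (hfB B hB) (hco B hB hCB)
    · rintro C (rfl | hC)
      · exact (LoopInd.rule r hr hrA hprem).mem_Ind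
      · obtain ⟨B, hB, hCB⟩ := Set.mem_iUnion₂.mp hC
        exact hInd B hB hCB

theorem LoopInd.of_mem_finite_comodel (hfin : I.Finite) (hco : IsComodel P I)
    (hInd : I ⊆ Ind (P ∪ coP)) (H : Set (Atom S)) (hA : A ∈ I) : LoopInd P coP H A := by
  induction hn : (I \ H).ncard using Nat.strong_induction_on generalizing H A with
  | _ n ih =>
  by_cases hAH : A ∈ H
  · exact .hp hAH (hInd hA)
  obtain ⟨r, hr, rfl, hprem⟩ := hco hA
  refine .rule r hr rfl fun B hB => ih _ ?_ (H ∪ {r.1}) (hprem B hB) rfl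
  rw [← hn, ← Set.sdiff_sdiff]
  exact Set.ncard_sdiff_singleton_lt_of_mem ⟨hA, hAH⟩ hfin.sdiff

end

theorem loop_characterizes_regular_semantics_general (S : Sig) (P coP : Set (Clause S))
    (A : Atom S) :
    LoopInd P coP ∅ A ↔ A ∈ FlexReg P coP := by
  constructor
  · intro h
    obtain ⟨I, hfin, hAI, hco, hInd⟩ := h.exists_finite_isComodelOver
    exact ⟨I, ⟨hfin, isComodelOver_empty_iff.mp hco, hInd⟩, Set.union_empty I ▸ hAI⟩
  · rintro ⟨I, ⟨hfin, hco, hInd⟩, hAI⟩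
    exact LoopInd.of_mem_finite_comodel hfin hco hInd ∅ hAI

/-- Correctness of the inductive characterization of the regular declarative semantics:
`∅ ⊢ A` is derivable in `Loop(P,coP)` iff `A ∈ FlexReg(P,coP)`. -/
theorem loop_characterizes_regular_semantics (S : Sig) (P coP : Set (Clause S))
    (hP : P.Finite) (hcoP : coP.Finite)
    (A : Atom S) (hA : A.Ground) :
    LoopInd P coP ∅ A ↔ A ∈ FlexReg P coP :=
  loop_characterizes_regular_semantics_general S P coP A

end FlexLP
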